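/- arXiv:2202.11225 — 7 statements merged into one kernel-verified Lean document; each statement's English description precedes it below -/
import Mathlib

section
/- Let 0 < β < 1 and r₂ > 1 be real numbers, let K ≥ 1 be a natural number, and let V : ℕ → ℝ be a sequence such that V(k) > 1 for all k ∈ {0,…,K} and V(k+1) ≤ V(k) − β·V(k)^{r₂} for all k ∈ {0,…,K−1}. For each k define q_k := V(k)·β^{−1/(r₂−1)} (so that V(k) = q_k·β^{1/(r₂−1)}). Then β^{1/(1−r₂)} < q_k < β^{2/(1−r₂)} for all k ∈ {0,…,K}. -/
/-- Lemma 1 of the paper: bounds on the rescaled Lyapunov sequence. -/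
theorem fixed_time_lemma1 (β r₂ : ℝ) (hβ0 : 0 < β) (hβ1 : β < 1) (hr₂ : 1 < r₂)
    (K : ℕ) (hK : 1 ≤ K) (V : ℕ → ℝ)
    (hV1 : ∀ k ≤ K, 1 < V k)
    (hdec : ∀ k < K, V (k + 1) ≤ V k - β * V k ^ r₂)
    (q : ℕ → ℝ) (hq : ∀ k, q k = V k * β ^ (-(1 / (r₂ - 1)))) :
    ∀ k ≤ K, β ^ (1 / (1 - r₂)) < q k ∧ q k < β ^ (2 / (1 - r₂)) := by
  have hr1 : (0:ℝ) < r₂ - 1 := by linarith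
  have hexp : -(1 / (r₂ - 1)) = 1 / (1 - r₂) := by
    rw [show (1:ℝ) - r₂ = -(r₂ - 1) by ring, div_neg]
  set c : ℝ := β ^ (1 / (1 - r₂)) with hc
  have hcpos : 0 < c := Real.rpow_pos_of_pos hβ0 _
  -- key: if c ≤ x then β * x ^ r₂ ≥ x
  have key : ∀ x : ℝ, c ≤ x → x ≤ β * x ^ r₂ := by
    intro x hx
    have hxpos : 0 < x := lt_of_lt_of_le hcpos hx
    have h1 : c ^ (r₂ - 1) ≤ x ^ (r₂ - 1) :=
      Real.rpow_le_rpow hcpos.le hx hr1.le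
    have h2 : c ^ (r₂ - 1) = β⁻¹ := by
      rw [hc, ← Real.rpow_mul hβ0.le,
        show (1 / (1 - r₂)) * (r₂ - 1) = -1 by
          rw [div_mul_eq_mul_div, one_mul, div_eq_iff (by linarith : (1:ℝ) - r₂ ≠ 0)]; ring,
        Real.rpow_neg_one]
    have h3 : x ^ (r₂ - 1) * x = x ^ r₂ := by
      rw [← Real.rpow_add_one hxpos.ne']; norm_num
    rw [← h3]
    calc x = β * (β⁻¹ * x) := by field_simp
    _ ≤ β * (x ^ (r₂ - 1) * x) := by
        apply mul_le_mul_of_nonneg_left _ hβ0.le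
        apply mul_le_mul_of_nonneg_right _ hxpos.le
        rw [← h2]; exact h1
  -- V k < c for k < K
  have hup : ∀ k < K, V k < c := by
    intro k hk
    by_contra h
    push_neg at h
    have h1 := key (V k) h
    have h2 := hdec k hk
    have h3 := hV1 (k + 1) hk
    linarith
  have hupK : ∀ k ≤ K, V k < c := by
    intro k hk
    rcases lt_or_eq_of_le hk with h | h
    · exact hup k h
    · subst h
      obtain ⟨m, rfl⟩ : ∃ m, k = m + 1 := ⟨k - 1, (Nat.succ_pred_eq_of_pos hK).symm⟩
      have hm : m < m + 1 := Nat.lt_succ_self m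
      have h2 := hdec m hm
      have hmc := hup m hm
      have hVm : 1 < V m := hV1 m hm.le
      have hpos : 0 < β * V m ^ r₂ :=
        mul_pos hβ0 (Real.rpow_pos_of_pos (by linarith) _)
      linarith
  intro k hk
  have hVk := hV1 k hk
  rw [hq k, hexp]
  constructor
  · nlinarith [hcpos]
  · have : V k * c < c * c := by nlinarith [hupK k hk]
    calc V k * c < c * c := this
    _ = β ^ (2 / (1 - r₂)) := by
        rw [hc, ← Real.rpow_add hβ0]
        ring_nf
end

section
/- Let 0 < β < 1 and r₂ > 1 be real numbers and let V : ℕ → ℝ be a sequence with V(k) ≥ 0 for all k, such that for every k, if V(k) > 1 then V(k+1) ≤ V(k) − β·V(k)^{r₂}. Then there exists a natural number K with K ≤ ⌊β^{−1}(β^{1/(1−r₂)} − 1)⌋ + 1 such that V(K) ≤ 1. -/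
/-- Part 1 of the proof of Theorem 1: the Lyapunov value drops to at most 1
within a fixed number of steps independent of `V 0`. -/
theorem fixed_time_part1 (β r₂ : ℝ) (hβ0 : 0 < β) (hβ1 : β < 1) (hr₂ : 1 < r₂)
    (V : ℕ → ℝ) (hV0 : ∀ k, 0 ≤ V k)
    (hdec : ∀ k, 1 < V k → V (k + 1) ≤ V k - β * V k ^ r₂) :
    ∃ K : ℕ, (K : ℤ) ≤ ⌊β⁻¹ * (β ^ (1 / (1 - r₂)) - 1)⌋ + 1 ∧ V K ≤ 1 := by
  set M : ℝ := β ^ (1 / (1 - r₂)) with hM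
  have hexp : 1 / (1 - r₂) < 0 := div_neg_of_pos_of_neg one_pos (by linarith)
  have hM1 : 1 < M := Real.one_lt_rpow_of_pos_of_lt_one_of_neg hβ0 hβ1 hexp
  have hc0 : 0 ≤ β⁻¹ * (M - 1) := by
    have : 0 < β⁻¹ := inv_pos.mpr hβ0
    nlinarith
  have hfl : 0 ≤ ⌊β⁻¹ * (M - 1)⌋ := Int.floor_nonneg.mpr hc0
  by_cases h0 : V 0 ≤ 1
  · exact ⟨0, by omega, h0⟩
  push_neg at h0
  have hV0pos : (0:ℝ) < V 0 := by linarith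
  by_cases hbig : M ≤ V 0
  · -- one step suffices
    have hMr : M ^ (r₂ - 1) = β⁻¹ := by
      rw [hM, ← Real.rpow_mul hβ0.le]
      have h1 : (1 / (1 - r₂)) * (r₂ - 1) = -1 := by
        rw [div_mul_eq_mul_div, one_mul, div_eq_iff (by intro h; apply absurd h; intro h2; linarith : (1:ℝ) - r₂ ≠ 0)]
        ring
      rw [h1, Real.rpow_neg_one]
    have h1 : V 0 ^ r₂ = V 0 ^ (r₂ - 1) * V 0 := by
      rw [← Real.rpow_add_one (ne_of_gt hV0pos)]
      norm_num
    have h2 : β⁻¹ ≤ V 0 ^ (r₂ - 1) := by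
      rw [← hMr]
      exact Real.rpow_le_rpow (by positivity) hbig (by linarith)
    have hstep := hdec 0 h0
    have hβinv : β * β⁻¹ = 1 := mul_inv_cancel₀ (ne_of_gt hβ0)
    have hV1 : V 1 ≤ 1 := by
      have : β * V 0 ^ r₂ ≥ V 0 := by
        rw [h1]
        calc V 0 = (β * β⁻¹) * V 0 := by rw [hβinv]; ring
        _ ≤ β * (V 0 ^ (r₂ - 1)) * V 0 := by
            apply mul_le_mul_of_nonneg_right _ hV0pos.le
            rw [mul_le_mul_iff_right₀ hβ0]
            exact h2
        _ = β * (V 0 ^ (r₂ - 1) * V 0) := by ring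
      linarith
    exact ⟨1, by omega, hV1⟩
  push_neg at hbig
  -- V decreases by at least β at each step while above 1
  have claim : ∀ k, (∃ j, j ≤ k ∧ V j ≤ 1) ∨ V k ≤ V 0 - k * β := by
    intro k
    induction k with
    | zero => right; simp
    | succ n ih =>
      rcases ih with ⟨j, hj, hVj⟩ | hVn
      · exact Or.inl ⟨j, Nat.le_succ_of_le hj, hVj⟩
      · by_cases hVn1 : V n ≤ 1
        · exact Or.inl ⟨n, Nat.le_succ n, hVn1⟩
        · push_neg at hVn1
          right
          have hstep := hdec n hVn1
          have hr : 1 ≤ V n ^ r₂ := Real.one_le_rpow hVn1.le (by linarith)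
          push_cast
          nlinarith
  set N : ℕ := (⌊β⁻¹ * (M - 1)⌋ + 1).toNat with hNdef
  have hNZ : (N : ℤ) = ⌊β⁻¹ * (M - 1)⌋ + 1 := Int.toNat_of_nonneg (by omega)
  have hNc : β⁻¹ * (M - 1) < (N : ℝ) := by
    have h := Int.lt_floor_add_one (β⁻¹ * (M - 1))
    have : ((N : ℤ) : ℝ) = ((⌊β⁻¹ * (M - 1)⌋ : ℝ) + 1) := by rw [hNZ]; push_cast; ring
    push_cast at this ⊢
    linarith
  rcases claim N with ⟨j, hj, hVj⟩ | hVN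
  · refine ⟨j, ?_, hVj⟩
    have : (j : ℤ) ≤ (N : ℤ) := by exact_mod_cast hj
    omega
  · refine ⟨N, by omega, ?_⟩
    have hNβ : M - 1 < N * β := by
      have h := mul_lt_mul_of_pos_right hNc hβ0
      have heq : β⁻¹ * (M - 1) * β = M - 1 := by field_simp
      linarith
    linarith
end

section
/- Let 0 < α < 1 and 0 < r₁ < 1 be real numbers and let V : ℕ → ℝ be a sequence with V(k) ≥ 0 for all k, V(0) ≤ 1, and V(k+1) ≤ V(k) − α·V(k)^{r₁} for all k. Then V(k) = 0 for every natural number k ≥ ⌊α^{1/(r₁−1)}⌋ + 1. -/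
/-- Part 2 of the proof of Theorem 1: once the Lyapunov value is at most 1,
it reaches exactly zero within a fixed number of steps and remains zero. -/
theorem fixed_time_part2 (α r₁ : ℝ) (hα0 : 0 < α) (hα1 : α < 1)
    (hr₁0 : 0 < r₁) (hr₁1 : r₁ < 1)
    (V : ℕ → ℝ) (hV0 : ∀ k, 0 ≤ V k) (hV01 : V 0 ≤ 1)
    (hdec : ∀ k, V (k + 1) ≤ V k - α * V k ^ r₁) :
    ∀ k : ℕ, ⌊α ^ (1 / (r₁ - 1))⌋ + 1 ≤ (k : ℤ) → V k = 0 := by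
  have hr1ne : (1 : ℝ) - r₁ ≠ 0 := by linarith
  have hr1pos : (0 : ℝ) < 1 - r₁ := by linarith
  set c : ℝ := α ^ (1 / (1 - r₁)) with hc
  have hcpos : 0 < c := Real.rpow_pos_of_pos hα0 _
  -- once zero, always zero
  have hzero : ∀ m, V m = 0 → ∀ n, m ≤ n → V n = 0 := by
    intro m hm n hn
    induction n with
    | zero =>
      have : m = 0 := Nat.le_zero.mp hn
      rwa [← this]
    | succ n ih =>
      rcases Nat.lt_or_ge m (n + 1) with h | h
      · have hn' : m ≤ n := by omega
        have hVn := ih hn'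
        have h1 := hdec n
        rw [hVn] at h1
        have h0 : (0:ℝ) ^ r₁ = 0 := Real.zero_rpow (ne_of_gt hr₁0)
        rw [h0] at h1
        have := hV0 (n + 1)
        linarith
      · have : m = n + 1 := by omega
        rw [← this]; exact hm
  intro k hk
  by_contra hVk
  have hVkpos : 0 < V k := lt_of_le_of_ne (hV0 k) (Ne.symm hVk)
  -- all earlier values positive
  have hpos : ∀ j, j ≤ k → 0 < V j := by
    intro j hj
    rcases lt_or_eq_of_le (hV0 j) with h | h
    · exact h
    · exact absurd (hzero j h.symm k hj) hVk
  -- each step before k loses at least c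
  have hstep : ∀ j, j < k → V (j + 1) ≤ V j - c := by
    intro j hj
    have hVj : 0 < V j := hpos j (le_of_lt hj)
    have h1 := hdec j
    have h2 := hV0 (j + 1)
    have hle : α * V j ^ r₁ ≤ V j := by linarith
    have hsplit : V j = V j ^ r₁ * V j ^ (1 - r₁) := by
      rw [← Real.rpow_add hVj]; simp
    have hrpos : 0 < V j ^ r₁ := Real.rpow_pos_of_pos hVj _
    have hα_le : α ≤ V j ^ (1 - r₁) := by
      rw [hsplit] at hle
      have := (mul_le_mul_iff_of_pos_right hrpos).mp (by linarith [hle] :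
        α * V j ^ r₁ ≤ V j ^ (1 - r₁) * V j ^ r₁)
      exact this
    have hVj_ge : c ≤ V j := by
      have h3 := Real.rpow_le_rpow (le_of_lt hα0) hα_le
        (le_of_lt (one_div_pos.mpr hr1pos))
      rw [← Real.rpow_mul (le_of_lt hVj), mul_one_div, div_self hr1ne,
        Real.rpow_one] at h3
      exact h3
    have hVjr : c ^ r₁ ≤ V j ^ r₁ :=
      Real.rpow_le_rpow (le_of_lt hcpos) hVj_ge (le_of_lt hr₁0)
    have hcid : α * c ^ r₁ = c := by
      have he : (1:ℝ) + 1 / (1 - r₁) * r₁ = 1 / (1 - r₁) := by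
        field_simp
        ring
      rw [hc, ← Real.rpow_mul (le_of_lt hα0)]
      conv_rhs => rw [← he]
      rw [Real.rpow_add hα0, Real.rpow_one]
    nlinarith [hdec j]
  -- linear decrease
  have hlin : ∀ j, j ≤ k → V j ≤ 1 - j * c := by
    intro j
    induction j with
    | zero => intro _; simpa using hV01
    | succ j ih =>
      intro hj
      have h1 := ih (by omega)
      have h2 := hstep j (by omega)
      push_cast
      nlinarith
  have hk1 : (0:ℝ) ≤ 1 - k * c := le_trans (hV0 k) (hlin k le_rfl)
  have hkle : (k:ℝ) ≤ 1 / c := by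
    rw [le_div_iff₀ hcpos]; linarith
  have hcinv : 1 / c = α ^ (1 / (r₁ - 1)) := by
    rw [hc, one_div, ← Real.rpow_neg (le_of_lt hα0),
      show r₁ - 1 = -(1 - r₁) from by ring, div_neg]
  rw [hcinv] at hkle
  have := Int.le_floor.mpr (by exact_mod_cast hkle : ((k:ℤ):ℝ) ≤ α ^ (1 / (r₁ - 1)))
  omega
end

section
/- Let α, β, r₁, r₂ be real numbers with 0 < α < 1, 0 < β < 1, 0 < r₁ < 1, r₂ > 1, and let V : ℕ → ℝ be a sequence with V(k) ≥ 0 for all k and V(k+1) ≤ V(k) − max{α·V(k)^{r₁}, β·V(k)^{r₂}} for all k. Then V(k) = 0 for every natural number k ≥ K*, where K* = ⌊α^{1/(r₁−1)}⌋ + ⌊β^{−1}(β^{1/(1−r₂)} − 1)⌋ + 2. -/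
/-- Sequence form of Theorem 1 of the paper: the combined Lyapunov decrement
condition forces the value to reach zero within the fixed time `K*`. -/
theorem fixed_time_theorem1_seq (α β r₁ r₂ : ℝ)
    (hα0 : 0 < α) (hα1 : α < 1) (hβ0 : 0 < β) (hβ1 : β < 1)
    (hr₁0 : 0 < r₁) (hr₁1 : r₁ < 1) (hr₂ : 1 < r₂)
    (V : ℕ → ℝ) (hV0 : ∀ k, 0 ≤ V k)
    (hdec : ∀ k, V (k + 1) ≤ V k - max (α * V k ^ r₁) (β * V k ^ r₂)) :
    ∀ k : ℕ,
      ⌊α ^ (1 / (r₁ - 1))⌋ + ⌊β⁻¹ * (β ^ (1 / (1 - r₂)) - 1)⌋ + 2 ≤ (k : ℤ) →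
      V k = 0 := by
  have h1r₁ : (0:ℝ) < 1 - r₁ := by linarith
  have hr₂1 : (0:ℝ) < r₂ - 1 := by linarith
  set δ : ℝ := α ^ (1 / (1 - r₁)) with hδdef
  set c : ℝ := β ^ (1 / (1 - r₂)) with hcdef
  have hδpos : 0 < δ := Real.rpow_pos_of_pos hα0 _
  have hδ1 : δ < 1 := Real.rpow_lt_one hα0.le hα1 (by positivity)
  have hc1 : 1 < c := by
    rw [hcdef, Real.one_lt_rpow_iff_of_pos hβ0]
    exact Or.inr ⟨hβ1, div_neg_of_pos_of_neg one_pos (by linarith)⟩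
  have hδpow : δ ^ (1 - r₁) = α := by
    rw [hδdef, ← Real.rpow_mul hα0.le]
    rw [show (1 / (1 - r₁)) * (1 - r₁) = 1 by field_simp]
    exact Real.rpow_one α
  have hcpow : c ^ (r₂ - 1) = β⁻¹ := by
    rw [hcdef, ← Real.rpow_mul hβ0.le]
    rw [show (1 / (1 - r₂)) * (r₂ - 1) = -1 by
      have hne : (1:ℝ) - r₂ ≠ 0 := by linarith
      field_simp; ring]
    rw [Real.rpow_neg hβ0.le, Real.rpow_one]
  have hαδ : α * δ ^ r₁ = δ := by
    rw [hδdef, ← Real.rpow_mul hα0.le]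
    nth_rewrite 1 [← Real.rpow_one α]
    rw [← Real.rpow_add hα0]
    congr 1
    have hne : (1:ℝ) - r₁ ≠ 0 := by linarith
    field_simp; ring
  -- monotonicity
  have hmono : ∀ k, V (k + 1) ≤ V k := by
    intro k
    have h1 : 0 ≤ α * V k ^ r₁ := mul_nonneg hα0.le (Real.rpow_nonneg (hV0 k) r₁)
    have h2 := le_max_left (α * V k ^ r₁) (β * V k ^ r₂)
    have := hdec k
    linarith
  have hanti : ∀ j k : ℕ, j ≤ k → V k ≤ V j := by
    intro j k hjk
    exact antitone_nat_of_succ_le hmono hjk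
  -- kill step when V ≤ δ
  have hkill : ∀ k, V k ≤ δ → V (k + 1) = 0 := by
    intro k hk
    refine le_antisymm ?_ (hV0 _)
    have hd := hdec k
    have h2 := le_max_left (α * V k ^ r₁) (β * V k ^ r₂)
    rcases eq_or_lt_of_le (hV0 k) with h0 | h0
    · have : α * V k ^ r₁ = 0 := by
        rw [← h0, Real.zero_rpow (ne_of_gt hr₁0), mul_zero]
      linarith
    · -- V k ≤ α * V k ^ r₁
      have hb : V k ^ (1 - r₁) ≤ α := by
        rw [← hδpow]
        exact Real.rpow_le_rpow (hV0 k) hk h1r₁.le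
      have hsplit : V k ^ (1 - r₁) * V k ^ r₁ = V k := by
        rw [← Real.rpow_add h0]
        simp
      have hmul : V k ^ (1 - r₁) * V k ^ r₁ ≤ α * V k ^ r₁ :=
        mul_le_mul_of_nonneg_right hb (Real.rpow_nonneg (hV0 k) r₁)
      rw [hsplit] at hmul
      linarith
  -- kill step when V ≥ c
  have hbig : ∀ k, c ≤ V k → V (k + 1) = 0 := by
    intro k hk
    refine le_antisymm ?_ (hV0 _)
    have hd := hdec k
    have h2 := le_max_right (α * V k ^ r₁) (β * V k ^ r₂)
    have h0 : 0 < V k := lt_of_lt_of_le (by linarith) hk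
    have hb : β⁻¹ ≤ V k ^ (r₂ - 1) := by
      rw [← hcpow]
      exact Real.rpow_le_rpow (by linarith) hk hr₂1.le
    have hsplit : V k ^ (r₂ - 1) * V k ^ (1:ℝ) = V k ^ r₂ := by
      rw [← Real.rpow_add h0]
      ring_nf
    have hmul : β⁻¹ * V k ≤ V k ^ (r₂ - 1) * V k := by
      exact mul_le_mul_of_nonneg_right hb (hV0 k)
    have : V k ≤ β * V k ^ r₂ := by
      rw [← hsplit]
      rw [Real.rpow_one] at *
      calc V k = β * (β⁻¹ * V k) := by field_simp
        _ ≤ β * (V k ^ (r₂ - 1) * V k) := by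
            exact mul_le_mul_of_nonneg_left hmul hβ0.le
    linarith
  -- step when V ≥ 1 : drop by β
  have hstep1 : ∀ k, 1 ≤ V k → V (k + 1) ≤ V k - β := by
    intro k hk
    have hd := hdec k
    have h2 := le_max_right (α * V k ^ r₁) (β * V k ^ r₂)
    have hb : (1:ℝ) ≤ V k ^ r₂ := by
      calc (1:ℝ) = 1 ^ r₂ := (Real.one_rpow r₂).symm
        _ ≤ V k ^ r₂ := Real.rpow_le_rpow zero_le_one hk (by linarith)
    nlinarith
  -- step when V ≥ δ : drop by δ
  have hstep2 : ∀ k, δ ≤ V k → V (k + 1) ≤ V k - δ := by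
    intro k hk
    have hd := hdec k
    have h2 := le_max_left (α * V k ^ r₁) (β * V k ^ r₂)
    have hb : δ ^ r₁ ≤ V k ^ r₁ := Real.rpow_le_rpow hδpos.le hk hr₁0.le
    nlinarith [hαδ]
  -- natural number bounds
  have hxpos : 0 < β⁻¹ * (c - 1) := mul_pos (inv_pos.mpr hβ0) (by linarith)
  set n₂ : ℕ := (⌊β⁻¹ * (c - 1)⌋).toNat with hn₂
  have hn₂cast : (n₂ : ℝ) = (⌊β⁻¹ * (c - 1)⌋ : ℝ) := by
    rw [hn₂]
    norm_cast
    exact Int.toNat_of_nonneg (Int.le_floor.mpr (by exact_mod_cast hxpos.le))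
  have hδinv1 : 1 < δ⁻¹ := by
    rw [lt_inv_comm₀ (by norm_num) hδpos]
    simpa using hδ1
  set n₁ : ℕ := (⌊δ⁻¹⌋).toNat with hn₁
  have hn₁cast : (n₁ : ℝ) = (⌊δ⁻¹⌋ : ℝ) := by
    rw [hn₁]
    norm_cast
    exact Int.toNat_of_nonneg (Int.le_floor.mpr (by exact_mod_cast (by linarith : (0:ℝ) ≤ δ⁻¹)))
  -- Phase 1: ∀ j, V (j+1) < 1 ∨ V (j+1) ≤ c - (j+1) β
  have phase1 : ∀ j : ℕ, V (j + 1) < 1 ∨ V (j + 1) ≤ c - (j + 1) * β := by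
    intro j
    induction j with
    | zero =>
      rcases le_or_gt c (V 0) with hc | hc
      · left; rw [hbig 0 hc]; norm_num
      · rcases lt_or_ge (V 0) 1 with h1 | h1
        · left; exact lt_of_le_of_lt (hmono 0) h1
        · right
          have := hstep1 0 h1
          push_cast
          linarith
    | succ j ih =>
      rcases lt_or_ge (V (j + 1)) 1 with h1 | h1
      · left; exact lt_of_le_of_lt (hmono (j + 1)) h1
      · rcases ih with ih | ih
        · linarith
        · right
          have := hstep1 (j + 1) h1
          push_cast at *
          linarith
  have hV1 : V (n₂ + 1) < 1 := by
    have hfloor : (β⁻¹ * (c - 1)) < (n₂ : ℝ) + 1 := by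
      rw [hn₂cast]
      exact Int.lt_floor_add_one _
    have hcb : c - ((n₂ : ℝ) + 1) * β < 1 := by
      have : β⁻¹ * (c - 1) * β < ((n₂:ℝ) + 1) * β :=
        mul_lt_mul_of_pos_right hfloor hβ0
      rw [mul_comm β⁻¹ (c-1), mul_assoc, inv_mul_cancel₀ (ne_of_gt hβ0), mul_one] at this
      linarith
    rcases phase1 n₂ with h | h
    · exact h
    · linarith
  -- Phase 2
  have phase2 : ∀ j : ℕ, V (n₂ + 1 + j) < δ ∨ V (n₂ + 1 + j) ≤ 1 - j * δ := by
    intro j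
    induction j with
    | zero => right; simpa using hV1.le
    | succ j ih =>
      have hm : V (n₂ + 1 + (j + 1)) ≤ V (n₂ + 1 + j) := hmono (n₂ + 1 + j)
      rcases ih with ih | ih
      · exact Or.inl (lt_of_le_of_lt hm ih)
      · rcases lt_or_ge (V (n₂ + 1 + j)) δ with h | h
        · exact Or.inl (lt_of_le_of_lt hm h)
        · right
          have hs : V (n₂ + 1 + (j + 1)) ≤ V (n₂ + 1 + j) - δ := hstep2 (n₂ + 1 + j) h
          push_cast
          linarith
  have hVδ : V (n₂ + 1 + n₁) ≤ δ := by
    have hfloor : δ⁻¹ < (n₁ : ℝ) + 1 := by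
      rw [hn₁cast]; exact Int.lt_floor_add_one _
    have h1δ : 1 - (n₁:ℝ) * δ < δ := by
      have : δ⁻¹ * δ < ((n₁:ℝ) + 1) * δ := mul_lt_mul_of_pos_right hfloor hδpos
      rw [inv_mul_cancel₀ (ne_of_gt hδpos)] at this
      linarith
    rcases phase2 n₁ with h | h
    · exact h.le
    · linarith
  have hVN : V (n₁ + n₂ + 2) = 0 := by
    have := hkill (n₂ + 1 + n₁) hVδ
    rw [show n₂ + 1 + n₁ + 1 = n₁ + n₂ + 2 by ring] at this
    exact this
  -- conclusion
  intro k hk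
  have heq1 : α ^ (1 / (r₁ - 1)) = δ⁻¹ := by
    rw [hδdef, ← Real.rpow_neg_one (α ^ (1 / (1 - r₁))), ← Real.rpow_mul hα0.le]
    congr 1
    rw [show r₁ - 1 = -(1 - r₁) by ring, div_neg, mul_neg_one]
  have hkN : (n₁ : ℤ) + n₂ + 2 ≤ (k : ℤ) := by
    rw [heq1] at hk
    have e1 : (n₁ : ℤ) = ⌊δ⁻¹⌋ := Int.toNat_of_nonneg (Int.le_floor.mpr (by exact_mod_cast (by linarith : (0:ℝ) ≤ δ⁻¹)))
    have e2 : (n₂ : ℤ) = ⌊β⁻¹ * (c - 1)⌋ := Int.toNat_of_nonneg (Int.le_floor.mpr (by exact_mod_cast hxpos.le))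
    rw [e1, e2]
    exact hk
  have hkN' : n₁ + n₂ + 2 ≤ k := by exact_mod_cast hkN
  have hle : V k ≤ V (n₁ + n₂ + 2) := hanti _ _ hkN'
  rw [hVN] at hle
  exact le_antisymm hle (hV0 k)
end

section
/- Let n be a natural number, F : ℝⁿ → ℝⁿ a map with F(0) = 0, and V : ℝⁿ → ℝ a function with V(0) = 0, V(x) > 0 for all x ≠ 0, and V(F(x)) − V(x) ≤ −max{α·V(x)^{r₁}, β·V(x)^{r₂}} for all x ≠ 0, where α, β, r₁, r₂ are real numbers with 0 < α < 1, 0 < β < 1, 0 < r₁ < 1, r₂ > 1. Then the discrete-time system y(k+1) = F(y(k)) is fixed-time convergent to the origin: for every initial state y₀ ∈ ℝⁿ and every natural number k ≥ K*, where K* = ⌊α^{1/(r₁−1)}⌋ + ⌊β^{−1}(β^{1/(1−r₂)} − 1)⌋ + 2, the k-th iterate F^[k](y₀) equals 0. -/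
/-- Auxiliary step-count function for the fixed-time convergence proof. -/
noncomputable def fixedTimeMSteps (c₁ b v : ℝ) : ℤ :=
  if v ≤ 0 then 0
  else if v ≤ c₁ then 1
  else if v ≤ 1 then 1 + ⌈(v - c₁) / c₁⌉
  else 1 + ⌈(1 - c₁) / c₁⌉ + ⌈(v - 1) / b⌉

lemma fixedTimeMSteps_pos {c₁ b v : ℝ} (hc₁ : 0 < c₁) (hc₁1 : c₁ < 1) (hb : 0 < b)
    (hv : 0 < v) : 1 ≤ fixedTimeMSteps c₁ b v := by
  unfold fixedTimeMSteps
  split_ifs with h1 h2 h3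
  · linarith
  · exact le_refl _
  · have : (0:ℝ) < (v - c₁) / c₁ := by
      apply div_pos ?_ hc₁; push_neg at h2; linarith
    have := Int.one_le_ceil_iff.mpr this
    linarith
  · have h4 : (0:ℝ) < (1 - c₁) / c₁ := by apply div_pos ?_ hc₁; linarith
    have h5 : (0:ℝ) < (v - 1) / b := by
      apply div_pos ?_ hb; push_neg at h3; linarith
    have := Int.one_le_ceil_iff.mpr h4
    have := Int.one_le_ceil_iff.mpr h5
    linarith

lemma fixedTimeMSteps_bound {c₁ b c₂ v : ℝ} (hc₁ : 0 < c₁) (hc₁1 : c₁ < 1) (hb : 0 < b)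
    (hc₂ : 1 < c₂) (hv : v < c₂) :
    fixedTimeMSteps c₁ b v ≤ ⌊1 / c₁⌋ + ⌊(c₂ - 1) / b⌋ + 2 := by
  have hf1 : (1:ℤ) ≤ ⌊1 / c₁⌋ := by
    rw [Int.le_floor]
    push_cast
    rw [le_div_iff₀ hc₁]; linarith
  have hf2 : (0:ℤ) ≤ ⌊(c₂ - 1) / b⌋ := by
    apply Int.floor_nonneg.mpr
    apply div_nonneg ?_ hb.le; linarith
  unfold fixedTimeMSteps
  split_ifs with h1 h2 h3
  · linarith
  · linarith
  · have hA : ⌈(v - c₁) / c₁⌉ ≤ ⌊1 / c₁⌋ + 1 := by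
      calc ⌈(v - c₁) / c₁⌉ ≤ ⌈1 / c₁⌉ := by
            apply Int.ceil_le_ceil
            rw [div_le_div_iff₀ hc₁ hc₁]
            nlinarith
        _ ≤ ⌊1 / c₁⌋ + 1 := Int.ceil_le_floor_add_one _
    linarith
  · have hA : ⌈(1 - c₁) / c₁⌉ ≤ ⌊1 / c₁⌋ := by
      have : (1 - c₁) / c₁ = 1 / c₁ - 1 := by field_simp
      rw [this, Int.ceil_sub_one]
      have := Int.ceil_le_floor_add_one (1 / c₁)
      linarith
    have hB : ⌈(v - 1) / b⌉ ≤ ⌊(c₂ - 1) / b⌋ + 1 := by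
      calc ⌈(v - 1) / b⌉ ≤ ⌈(c₂ - 1) / b⌉ := by
            apply Int.ceil_le_ceil
            apply div_le_div_of_nonneg_right ?_ hb.le
            linarith
        _ ≤ ⌊(c₂ - 1) / b⌋ + 1 := Int.ceil_le_floor_add_one _
    linarith

lemma fixedTimeMSteps_dec {c₁ b v w : ℝ} (hc₁ : 0 < c₁) (hc₁1 : c₁ < 1) (hb : 0 < b)
    (hb1 : b < 1) (hv : 0 < v)
    (ha : v ≤ c₁ → w ≤ 0)
    (hmid : c₁ < v → v ≤ 1 → w ≤ v - c₁)
    (hhi : 1 < v → w ≤ v - b) :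
    fixedTimeMSteps c₁ b w < fixedTimeMSteps c₁ b v := by
  rcases le_or_gt w 0 with hw | hw
  · have : fixedTimeMSteps c₁ b w = 0 := by unfold fixedTimeMSteps; rw [if_pos hw]
    rw [this]
    exact fixedTimeMSteps_pos hc₁ hc₁1 hb hv
  · have hvc₁ : c₁ < v := by
      by_contra h
      push_neg at h
      exact absurd (ha h) (not_le.mpr hw)
    rcases le_or_gt v 1 with hv1 | hv1
    · -- middle region
      have hwv : w ≤ v - c₁ := hmid hvc₁ hv1
      have hmv : fixedTimeMSteps c₁ b v = 1 + ⌈(v - c₁) / c₁⌉ := by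
        unfold fixedTimeMSteps
        rw [if_neg (by linarith), if_neg (by linarith), if_pos hv1]
      have hceil1 : 1 ≤ ⌈(v - c₁) / c₁⌉ :=
        Int.one_le_ceil_iff.mpr (div_pos (by linarith) hc₁)
      rcases le_or_gt w c₁ with hwc | hwc
      · have : fixedTimeMSteps c₁ b w = 1 := by
          unfold fixedTimeMSteps
          rw [if_neg (by linarith), if_pos hwc]
        rw [this, hmv]; linarith
      · have hmw : fixedTimeMSteps c₁ b w = 1 + ⌈(w - c₁) / c₁⌉ := by
          unfold fixedTimeMSteps
          rw [if_neg (by linarith), if_neg (by linarith), if_pos (by linarith)]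
        rw [hmw, hmv]
        have : ⌈(w - c₁) / c₁⌉ ≤ ⌈(v - c₁) / c₁⌉ - 1 := by
          have heq : (v - c₁) / c₁ - 1 = (v - 2 * c₁) / c₁ := by field_simp; ring
          calc ⌈(w - c₁) / c₁⌉ ≤ ⌈(v - c₁) / c₁ - 1⌉ := by
                apply Int.ceil_le_ceil
                rw [heq]
                apply div_le_div_of_nonneg_right ?_ hc₁.le
                linarith
            _ = ⌈(v - c₁) / c₁⌉ - 1 := Int.ceil_sub_one _
        linarith
    · -- high region
      have hwv : w ≤ v - b := hhi hv1
      have hmv : fixedTimeMSteps c₁ b v = 1 + ⌈(1 - c₁) / c₁⌉ + ⌈(v - 1) / b⌉ := by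
        unfold fixedTimeMSteps
        rw [if_neg (by linarith), if_neg (by linarith), if_neg (by linarith)]
      have hceil1 : 1 ≤ ⌈(v - 1) / b⌉ :=
        Int.one_le_ceil_iff.mpr (div_pos (by linarith) hb)
      have hA0 : 0 ≤ ⌈(1 - c₁) / c₁⌉ := Int.ceil_nonneg (div_nonneg (by linarith) hc₁.le)
      rcases le_or_gt w 1 with hw1 | hw1
      · have hmw : fixedTimeMSteps c₁ b w ≤ 1 + ⌈(1 - c₁) / c₁⌉ := by
          unfold fixedTimeMSteps
          rw [if_neg (by linarith)]
          split_ifs with h2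
          · linarith
          · have h4 : ⌈(w - c₁) / c₁⌉ ≤ ⌈(1 - c₁) / c₁⌉ := by
              apply Int.ceil_le_ceil
              apply div_le_div_of_nonneg_right ?_ hc₁.le
              linarith
            linarith
        rw [hmv]; linarith
      · have hmw : fixedTimeMSteps c₁ b w = 1 + ⌈(1 - c₁) / c₁⌉ + ⌈(w - 1) / b⌉ := by
          unfold fixedTimeMSteps
          rw [if_neg (by linarith), if_neg (by linarith), if_neg (by linarith)]
        rw [hmw, hmv]
        have : ⌈(w - 1) / b⌉ ≤ ⌈(v - 1) / b⌉ - 1 := by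
          have heq : (v - 1) / b - 1 = (v - 1 - b) / b := by field_simp
          calc ⌈(w - 1) / b⌉ ≤ ⌈(v - 1) / b - 1⌉ := by
                apply Int.ceil_le_ceil
                rw [heq]
                apply div_le_div_of_nonneg_right ?_ hb.le
                linarith
            _ = ⌈(v - 1) / b⌉ - 1 := Int.ceil_sub_one _
        linarith

lemma fixedTime_iterate_zero {X : Type*} [Zero X] {F : X → X} {V : X → ℝ} {c₁ b : ℝ}
    (hF0 : F 0 = 0) (hVpos : ∀ x, x ≠ 0 → 0 < V x)
    (hc₁ : 0 < c₁) (hc₁1 : c₁ < 1) (hb : 0 < b)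
    (hdec : ∀ x, x ≠ 0 → fixedTimeMSteps c₁ b (V (F x)) < fixedTimeMSteps c₁ b (V x)) :
    ∀ k : ℕ, ∀ x : X, fixedTimeMSteps c₁ b (V x) ≤ (k : ℤ) → F^[k] x = 0 := by
  intro k
  induction k with
  | zero =>
    intro x hx
    by_contra h
    have h0 : x ≠ 0 := by simpa using h
    have := fixedTimeMSteps_pos hc₁ hc₁1 hb (hVpos x h0)
    simp at hx
    omega
  | succ k ih =>
    intro x hx
    by_cases h0 : x = 0
    · rw [h0]
      exact Function.iterate_fixed hF0 _
    · rw [Function.iterate_succ_apply]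
      apply ih
      have := hdec x h0
      push_cast
      push_cast at hx
      omega

/-- Global system form of Theorem 1 of the paper: fixed-time convergence of the
discrete-time system `y (k+1) = F (y k)` to the origin. -/
theorem fixed_time_theorem1_system (n : ℕ)
    (F : EuclideanSpace ℝ (Fin n) → EuclideanSpace ℝ (Fin n)) (hF0 : F 0 = 0)
    (V : EuclideanSpace ℝ (Fin n) → ℝ)
    (α β r₁ r₂ : ℝ)
    (hα0 : 0 < α) (hα1 : α < 1) (hβ0 : 0 < β) (hβ1 : β < 1)
    (hr₁0 : 0 < r₁) (hr₁1 : r₁ < 1) (hr₂ : 1 < r₂)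
    (hV0 : V 0 = 0) (hVpos : ∀ x, x ≠ 0 → 0 < V x)
    (hdec : ∀ x, x ≠ 0 → V (F x) - V x ≤ -max (α * V x ^ r₁) (β * V x ^ r₂)) :
    ∀ y₀ : EuclideanSpace ℝ (Fin n), ∀ k : ℕ,
      ⌊α ^ (1 / (r₁ - 1))⌋ + ⌊β⁻¹ * (β ^ (1 / (1 - r₂)) - 1)⌋ + 2 ≤ (k : ℤ) →
      F^[k] y₀ = 0 := by
  set c₁ : ℝ := α ^ (1 / (1 - r₁)) with hc₁def
  set c₂ : ℝ := β ^ (1 / (1 - r₂)) with hc₂def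
  have hr₁ne : (1 : ℝ) - r₁ ≠ 0 := by linarith
  have hr₂ne : (1 : ℝ) - r₂ ≠ 0 := by linarith
  have hc₁pos : 0 < c₁ := Real.rpow_pos_of_pos hα0 _
  have hc₁lt1 : c₁ < 1 := Real.rpow_lt_one hα0.le hα1 (div_pos one_pos (by linarith))
  have hc₂gt1 : 1 < c₂ :=
    (Real.one_lt_rpow_iff_of_pos hβ0).mpr (Or.inr ⟨hβ1, by
      apply div_neg_of_pos_of_neg one_pos; linarith⟩)
  -- identify the floor in the statement with ⌊1 / c₁⌋
  have hfloor : ⌊α ^ (1 / (r₁ - 1))⌋ = ⌊1 / c₁⌋ := by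
    have h1 : r₁ - 1 = -(1 - r₁) := by ring
    rw [h1, div_neg, Real.rpow_neg hα0.le, ← hc₁def, one_div]
  -- identify the second floor
  have hfloor2 : ⌊β⁻¹ * (β ^ (1 / (1 - r₂)) - 1)⌋ = ⌊(c₂ - 1) / β⌋ := by
    rw [inv_mul_eq_div, hc₂def]
  -- rpow facts
  have fact_a : ∀ v : ℝ, 0 < v → v ≤ c₁ → v ≤ α * v ^ r₁ := by
    intro v hv hvc
    have h1 : v ^ ((1:ℝ) - r₁) ≤ c₁ ^ ((1:ℝ) - r₁) :=
      Real.rpow_le_rpow hv.le hvc (by linarith)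
    have h2 : c₁ ^ ((1:ℝ) - r₁) = α := by
      rw [hc₁def, ← Real.rpow_mul hα0.le, one_div_mul_cancel hr₁ne, Real.rpow_one]
    have h3 : v = v ^ r₁ * v ^ ((1:ℝ) - r₁) := by
      rw [← Real.rpow_add hv]; ring_nf; rw [Real.rpow_one]
    have h4 : (0:ℝ) < v ^ r₁ := Real.rpow_pos_of_pos hv _
    calc v = v ^ r₁ * v ^ ((1:ℝ) - r₁) := h3
      _ ≤ v ^ r₁ * α := mul_le_mul_of_nonneg_left (h1.trans h2.le) h4.le
      _ = α * v ^ r₁ := by ring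
  have fact_b : ∀ v : ℝ, c₂ ≤ v → v ≤ β * v ^ r₂ := by
    intro v hvc
    have hv : 0 < v := lt_of_lt_of_le (by linarith) hvc
    have h1 : v ^ ((1:ℝ) - r₂) ≤ c₂ ^ ((1:ℝ) - r₂) :=
      Real.rpow_le_rpow_of_nonpos (by linarith) hvc (by linarith)
    have h2 : c₂ ^ ((1:ℝ) - r₂) = β := by
      rw [hc₂def, ← Real.rpow_mul hβ0.le, one_div_mul_cancel hr₂ne, Real.rpow_one]
    have h3 : v = v ^ r₂ * v ^ ((1:ℝ) - r₂) := by
      rw [← Real.rpow_add hv]; ring_nf; rw [Real.rpow_one]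
    have h4 : (0:ℝ) < v ^ r₂ := Real.rpow_pos_of_pos hv _
    calc v = v ^ r₂ * v ^ ((1:ℝ) - r₂) := h3
      _ ≤ v ^ r₂ * β := mul_le_mul_of_nonneg_left (h1.trans h2.le) h4.le
      _ = β * v ^ r₂ := by ring
  have fact_c : ∀ v : ℝ, c₁ ≤ v → c₁ ≤ α * v ^ r₁ := by
    intro v hvc
    have h1 : c₁ ^ r₁ ≤ v ^ r₁ := Real.rpow_le_rpow hc₁pos.le hvc hr₁0.le
    have h2 : α * c₁ ^ r₁ = c₁ := by
      rw [hc₁def, ← Real.rpow_mul hα0.le]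
      rw [show α * α ^ (1 / (1 - r₁) * r₁) = α ^ (1:ℝ) * α ^ (1 / (1 - r₁) * r₁) by
        rw [Real.rpow_one]]
      rw [← Real.rpow_add hα0]
      congr 1
      field_simp
      ring
    nlinarith
  have fact_d : ∀ v : ℝ, 1 ≤ v → β ≤ β * v ^ r₂ := by
    intro v hv
    have h1 : (1:ℝ) ≤ v ^ r₂ := Real.one_le_rpow hv (by linarith)
    nlinarith
  -- mstep decreases along trajectories
  have hdec' : ∀ x, x ≠ 0 →
      fixedTimeMSteps c₁ β (V (F x)) < fixedTimeMSteps c₁ β (V x) := by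
    intro x hx
    have hVx : 0 < V x := hVpos x hx
    have hd := hdec x hx
    apply fixedTimeMSteps_dec hc₁pos hc₁lt1 hβ0 hβ1 hVx
    · intro h
      have := fact_a (V x) hVx h
      have hmax : α * V x ^ r₁ ≤ max (α * V x ^ r₁) (β * V x ^ r₂) := le_max_left _ _
      linarith
    · intro h _
      have := fact_c (V x) h.le
      have hmax : α * V x ^ r₁ ≤ max (α * V x ^ r₁) (β * V x ^ r₂) := le_max_left _ _
      linarith
    · intro h
      have := fact_d (V x) h.le
      have hmax : β * V x ^ r₂ ≤ max (α * V x ^ r₁) (β * V x ^ r₂) := le_max_right _ _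
      linarith
  intro y₀ k hk
  rw [hfloor, hfloor2] at hk
  by_cases h0 : y₀ = 0
  · rw [h0]; exact Function.iterate_fixed hF0 _
  · have hVy : 0 < V y₀ := hVpos y₀ h0
    rcases lt_or_ge (V y₀) c₂ with hlt | hge
    · apply fixedTime_iterate_zero hF0 hVpos hc₁pos hc₁lt1 hβ0 hdec'
      calc fixedTimeMSteps c₁ β (V y₀) ≤ ⌊1 / c₁⌋ + ⌊(c₂ - 1) / β⌋ + 2 :=
            fixedTimeMSteps_bound hc₁pos hc₁lt1 hβ0 hc₂gt1 hlt
        _ ≤ (k : ℤ) := hk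
    · -- one step kills it
      have hFy : F y₀ = 0 := by
        by_contra hne
        have h1 := hVpos _ hne
        have h2 := hdec y₀ h0
        have h3 := fact_b (V y₀) hge
        have hmax : β * V y₀ ^ r₂ ≤ max (α * V y₀ ^ r₁) (β * V y₀ ^ r₂) := le_max_right _ _
        linarith
      have hk1 : 1 ≤ k := by
        have hf1 : (1:ℤ) ≤ ⌊1 / c₁⌋ := by
          rw [Int.le_floor]; push_cast; rw [le_div_iff₀ hc₁pos]; linarith
        have hf2 : (0:ℤ) ≤ ⌊(c₂ - 1) / β⌋ :=
          Int.floor_nonneg.mpr (div_nonneg (by linarith) hβ0.le)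
        omega
      obtain ⟨m, rfl⟩ : ∃ m, k = m + 1 := ⟨k - 1, by omega⟩
      rw [Function.iterate_succ_apply, hFy]
      exact Function.iterate_fixed hF0 _
end

section
/- Let 0 < β < 1, r₂ > 1, c ≥ 0, and m₁ > 1 be real numbers, set β_d = (1 − 1/m₁)·β and 𝓑 = (m₁·c/β)^{1/r₂}, and let T = max{𝓑, 1}. Let V : ℕ → ℝ be a sequence with V(k) ≥ 0 for all k such that for every k, if V(k) > T then V(k+1) ≤ V(k) − β·V(k)^{r₂} + c. Then there exists a natural number K with K ≤ ⌊β_d^{−1}(β_d^{1/(1−r₂)} − 1)⌋ + 1 such that V(K) ≤ T. -/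
/-- Sequence form of the first case of Theorem 2 of the paper: under bounded
perturbation the Lyapunov value enters `{V ≤ max 𝓑 1}` in fixed time. -/
theorem fixed_time_attractive_part1 (β r₂ c m₁ : ℝ)
    (hβ0 : 0 < β) (hβ1 : β < 1) (hr₂ : 1 < r₂) (hc : 0 ≤ c) (hm : 1 < m₁)
    (βd B T : ℝ) (hβd : βd = (1 - 1 / m₁) * β)
    (hB : B = (m₁ * c / β) ^ (1 / r₂)) (hT : T = max B 1)
    (V : ℕ → ℝ) (hV0 : ∀ k, 0 ≤ V k)
    (hdec : ∀ k, T < V k → V (k + 1) ≤ V k - β * V k ^ r₂ + c) :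
    ∃ K : ℕ, (K : ℤ) ≤ ⌊βd⁻¹ * (βd ^ (1 / (1 - r₂)) - 1)⌋ + 1 ∧ V K ≤ T := by
  have hm0 : (0:ℝ) < m₁ := lt_trans one_pos hm
  have hβdpos : 0 < βd := by
    rw [hβd]
    have h1 : 1 / m₁ < 1 := by rw [div_lt_one hm0]; exact hm
    have h2 : 0 < 1 - 1 / m₁ := by linarith
    positivity
  have hβdlt1 : βd < 1 := by
    rw [hβd]
    have h1 : 0 < 1 / m₁ := by positivity
    nlinarith
  set θ : ℝ := βd ^ (1 / (1 - r₂)) with hθdef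
  have hθ1 : 1 < θ := by
    apply Real.one_lt_rpow_of_pos_of_lt_one_of_neg hβdpos hβdlt1
    rw [div_neg_iff]
    exact Or.inl ⟨one_pos, by linarith⟩
  have hθ0 : 0 < θ := lt_trans one_pos hθ1
  have hrne : (1:ℝ) - r₂ ≠ 0 := by intro h; nlinarith
  have hθpow : θ ^ (r₂ - 1) = βd⁻¹ := by
    rw [hθdef, ← Real.rpow_mul hβdpos.le]
    have h : 1 / (1 - r₂) * (r₂ - 1) = -1 := by field_simp; ring
    rw [h, Real.rpow_neg_one]
  have hT1 : 1 ≤ T := by rw [hT]; exact le_max_right _ _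
  have hB0 : 0 ≤ B := by rw [hB]; positivity
  -- key one-step estimate
  have key : ∀ k, T < V k → V (k + 1) ≤ V k - βd * V k ^ r₂ := by
    intro k hk
    have h1 := hdec k hk
    have hVkB : B < V k := lt_of_le_of_lt (hT ▸ le_max_left B 1) hk
    have hX : m₁ * c / β ≤ V k ^ r₂ := by
      have h2 : B ^ r₂ ≤ V k ^ r₂ :=
        Real.rpow_le_rpow hB0 hVkB.le (by linarith)
      have h3 : B ^ r₂ = m₁ * c / β := by
        rw [hB, ← Real.rpow_mul (by positivity)]
        rw [one_div, inv_mul_cancel₀ (by linarith : r₂ ≠ 0), Real.rpow_one]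
      linarith [h3 ▸ h2]
    have hc2 : c ≤ (β - βd) * V k ^ r₂ := by
      have heq : β - βd = β / m₁ := by rw [hβd]; field_simp; ring
      rw [heq]
      have : β / m₁ * (m₁ * c / β) ≤ β / m₁ * V k ^ r₂ :=
        mul_le_mul_of_nonneg_left hX (by positivity)
      have heq2 : β / m₁ * (m₁ * c / β) = c := by field_simp
      linarith [heq2 ▸ this]
    nlinarith [hc2]
  -- proof by contradiction
  by_contra hcontra
  push_neg at hcontra
  set Nz : ℤ := ⌊βd⁻¹ * (θ - 1)⌋ with hNz
  have hNz0 : 0 ≤ Nz := by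
    rw [hNz]
    apply Int.floor_nonneg.mpr
    have : 0 ≤ θ - 1 := by linarith
    positivity
  set N : ℕ := Nz.toNat + 1 with hNdef
  have hNcast : (N : ℤ) = Nz + 1 := by
    rw [hNdef]; push_cast [Int.toNat_of_nonneg hNz0]; ring
  have hcon : ∀ K : ℕ, K ≤ N → T < V K := by
    intro K hK
    apply hcontra
    rw [← hNcast]
    exact_mod_cast hK
  -- while within horizon, V stays below θ
  have haux : ∀ k, k + 1 ≤ N → V k < θ := by
    intro k hk
    by_contra hge
    push_neg at hge
    have hTk : T < V k := hcon k (by omega)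
    have hTk1 : T < V (k + 1) := hcon (k + 1) hk
    have hstep := key k hTk
    have hpow : βd⁻¹ * V k ≤ V k ^ r₂ := by
      have h1 : θ ^ (r₂ - 1) ≤ V k ^ (r₂ - 1) :=
        Real.rpow_le_rpow hθ0.le hge (by linarith)
      have hVk0 : 0 < V k := lt_of_lt_of_le hθ0 hge
      have h2 : V k ^ r₂ = V k ^ (r₂ - 1) * V k := by
        rw [← Real.rpow_add_one hVk0.ne']
        ring_nf
      rw [h2, ← hθpow]
      exact mul_le_mul_of_nonneg_right h1 hVk0.le
    have h3 : V k ≤ βd * V k ^ r₂ := by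
      have := mul_le_mul_of_nonneg_left hpow hβdpos.le
      rwa [← mul_assoc, mul_inv_cancel₀ hβdpos.ne', one_mul] at this
    linarith
  -- linear decrease
  have hind : ∀ n, n ≤ N → V n ≤ θ - n * βd := by
    intro n
    induction n with
    | zero =>
      intro _
      have := haux 0 (by omega)
      simpa using this.le
    | succ n ih =>
      intro hn
      have hVn := ih (by omega)
      have hVnθ := haux n hn
      have hTn : T < V n := hcon n (by omega)
      have h1Vn : 1 < V n := lt_of_le_of_lt hT1 hTn
      have hpow1 : (1:ℝ) ≤ V n ^ r₂ :=
        Real.one_le_rpow h1Vn.le (by linarith)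
      have hstep := key n hTn
      have : βd ≤ βd * V n ^ r₂ := le_mul_of_one_le_right hβdpos.le hpow1
      push_cast
      linarith
  have hVN := hind N le_rfl
  have hTN : T < V N := hcon N le_rfl
  have hNgt : βd⁻¹ * (θ - 1) < (N : ℝ) := by
    have := Int.lt_floor_add_one (βd⁻¹ * (θ - 1))
    have hcast : ((Nz : ℤ) : ℝ) + 1 = (N : ℝ) := by
      exact_mod_cast congrArg (Int.cast : ℤ → ℝ) hNcast.symm
    calc βd⁻¹ * (θ - 1) < (Nz : ℝ) + 1 := by exact_mod_cast this
      _ = (N : ℝ) := hcast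
  have hfin : θ - 1 < (N : ℝ) * βd := by
    have := mul_lt_mul_of_pos_right hNgt hβdpos
    rwa [mul_comm βd⁻¹ _, mul_assoc, inv_mul_cancel₀ hβdpos.ne', mul_one] at this
  linarith
end

section
/- Let 0 < α < 1, 0 < r₁ < 1, c ≥ 0, and m₂ > 1 be real numbers, set α_d = (1 − 1/m₂)·α and 𝓑 = (m₂·c/α)^{1/r₁}. Let V : ℕ → ℝ be a sequence with V(k) ≥ 0 for all k, V(0) ≤ 1, such that for every k, if V(k) > 𝓑 then V(k+1) ≤ V(k) − α·V(k)^{r₁} + c. Then there exists a natural number K with K ≤ ⌊α_d^{1/(r₁−1)}⌋ + 1 such that V(K) ≤ 𝓑. -/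
/-- Sequence form of the second case of Theorem 2 of the paper: starting from
Lyapunov value at most 1, the trajectory enters `{V ≤ 𝓑}` in fixed time. -/
theorem fixed_time_attractive_part2 (α r₁ c m₂ : ℝ)
    (hα0 : 0 < α) (hα1 : α < 1) (hr₁0 : 0 < r₁) (hr₁1 : r₁ < 1)
    (hc : 0 ≤ c) (hm : 1 < m₂)
    (αd B : ℝ) (hαd : αd = (1 - 1 / m₂) * α)
    (hB : B = (m₂ * c / α) ^ (1 / r₁))
    (V : ℕ → ℝ) (hV0 : ∀ k, 0 ≤ V k) (hV01 : V 0 ≤ 1)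
    (hdec : ∀ k, B < V k → V (k + 1) ≤ V k - α * V k ^ r₁ + c) :
    ∃ K : ℕ, (K : ℤ) ≤ ⌊αd ^ (1 / (r₁ - 1))⌋ + 1 ∧ V K ≤ B := by
  have hm0 : 0 < m₂ := lt_trans one_pos hm
  have h1m : 0 < 1 - 1 / m₂ := by
    have : 1 / m₂ < 1 := by rw [div_lt_one hm0]; exact hm
    linarith
  have hαd0 : 0 < αd := by rw [hαd]; positivity
  have hαd1 : αd < 1 := by
    rw [hαd]
    have h1' : 1 - 1 / m₂ < 1 := by
      have : 0 < 1 / m₂ := by positivity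
      linarith
    nlinarith [h1', hα0, hα1]
  have h1r : 0 < 1 - r₁ := by linarith
  set θ := αd ^ (1 / (1 - r₁)) with hθ
  have hθ0 : 0 < θ := Real.rpow_pos_of_pos hαd0 _
  have hθ1 : θ ≤ 1 := Real.rpow_le_one hαd0.le hαd1.le (by positivity)
  have hB0 : 0 ≤ B := by rw [hB]; positivity
  have hBr : B ^ r₁ = m₂ * c / α := by
    rw [hB, ← Real.rpow_mul (show (0:ℝ) ≤ m₂ * c / α by positivity),
      one_div, inv_mul_cancel₀ hr₁0.ne', Real.rpow_one]
  have hinv : αd ^ (1 / (r₁ - 1)) = θ⁻¹ := by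
    rw [hθ, ← Real.rpow_neg hαd0.le]
    congr 1
    rw [← div_neg, neg_sub]
  have hθpow : θ ^ (1 - r₁) = αd := by
    rw [hθ, ← Real.rpow_mul hαd0.le, one_div_mul_cancel (ne_of_gt h1r), Real.rpow_one]
  have hθid : αd * θ ^ r₁ = θ := by
    have h1 : θ ^ r₁ = αd ^ (1 / (1 - r₁) * r₁) := by
      rw [hθ, ← Real.rpow_mul hαd0.le]
    rw [h1]
    rw [show αd * αd ^ (1 / (1 - r₁) * r₁) = αd ^ (1 + 1 / (1 - r₁) * r₁) by
      rw [Real.rpow_add hαd0, Real.rpow_one]]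
    rw [hθ]
    congr 1
    field_simp
    ring
  by_contra h
  push_neg at h
  set F : ℤ := ⌊αd ^ (1 / (r₁ - 1))⌋ + 1 with hF
  have hFr : αd ^ (1 / (r₁ - 1)) < (F : ℝ) := by
    rw [hF]; push_cast; exact Int.lt_floor_add_one _
  have hF0 : 0 < F := by
    have h1 : (0:ℝ) < αd ^ (1 / (r₁ - 1)) := Real.rpow_pos_of_pos hαd0 _
    have : (0:ℝ) < (F:ℝ) := lt_trans h1 hFr
    exact_mod_cast this
  set N : ℕ := F.toNat with hN
  have hNc : (N : ℤ) = F := Int.toNat_of_nonneg hF0.le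
  have hVk : ∀ k : ℕ, k ≤ N → B < V k := by
    intro k hk
    apply h
    rw [← hNc]
    exact_mod_cast hk
  have step : ∀ k : ℕ, k < N → V (k + 1) ≤ V k - θ := by
    intro k hk
    have hVkB := hVk k hk.le
    have hVk1B := hVk (k + 1) hk
    have hd := hdec k hVkB
    have hVpos : 0 < V k := lt_of_le_of_lt hB0 hVkB
    have hpow : B ^ r₁ < V k ^ r₁ := Real.rpow_lt_rpow hB0 hVkB hr₁0
    have hc2 : m₂ * c < α * V k ^ r₁ := by
      rw [hBr] at hpow
      rw [div_lt_iff₀ hα0] at hpow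
      linarith [hpow]
    have hstep2 : V (k + 1) ≤ V k - αd * V k ^ r₁ := by
      have hq : αd * V k ^ r₁ * m₂ = α * V k ^ r₁ * m₂ - α * V k ^ r₁ := by
        rw [hαd]; field_simp
      nlinarith [hc2, hm0, hd]
    have hθlt : θ < V k := by
      by_contra hle
      push_neg at hle
      have h1 : V k ^ (1 - r₁) ≤ αd := by
        calc V k ^ (1 - r₁) ≤ θ ^ (1 - r₁) :=
              Real.rpow_le_rpow hVpos.le hle h1r.le
          _ = αd := hθpow
      have h2 : V k ≤ αd * V k ^ r₁ := by
        have h3 := mul_le_mul_of_nonneg_right h1 (Real.rpow_nonneg (hV0 k) r₁)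
        rwa [← Real.rpow_add hVpos, sub_add_cancel, Real.rpow_one] at h3
      have h4 : V (k + 1) ≤ 0 := by linarith
      linarith [hB0, hVk1B]
    have h5 : θ ≤ αd * V k ^ r₁ := by
      calc θ = αd * θ ^ r₁ := hθid.symm
        _ ≤ αd * V k ^ r₁ := by
            apply mul_le_mul_of_nonneg_left _ hαd0.le
            exact Real.rpow_le_rpow hθ0.le hθlt.le hr₁0.le
    linarith
  have hsum : ∀ k : ℕ, k ≤ N → V k ≤ 1 - k * θ := by
    intro k
    induction k with
    | zero => intro _; simpa using hV01
    | succ n ih =>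
      intro hk
      have h1 := ih (by omega)
      have h2 := step n (by omega)
      push_cast
      linarith
  have hlast := hsum N le_rfl
  have h2 : θ⁻¹ < (N : ℝ) := by
    rw [← hinv]
    calc αd ^ (1 / (r₁ - 1)) < (F : ℝ) := hFr
      _ = (N : ℝ) := by exact_mod_cast hNc.symm
  have hNθ : 1 < (N : ℝ) * θ := by
    rw [inv_lt_iff_one_lt_mul₀ hθ0] at h2
    linarith [h2]
  linarith [hV0 N, hlast]
end
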